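/- Consider the linear model Y_{i,t} = Z_{i,t}β* + X_{i,t}ᵀγ + ε_{i,t} with fixed Z ∈ ℝ^{N×T}, fixed controls X, and integrable random errors ε ∈ ℝ^{N×T} with E[ε] = 0. With a partition C₁,…,C_M of {1,…,N} and symmetric P ∈ ℝ^{T×T} with P² = I_T, let ε̂ = MosaicResid(Y, X), A = MosaicResid(Z, X), D = ½(A − AP), and assume ⟨D, D⟩ > 0. Then the mosaic estimator β̂_mosaic = ⟨D, ε̂⟩/⟨D, D⟩ is unbiased: E[β̂_mosaic] = β*. -/

import Mathlib

/-!
Substituting the model into the residualization, the controls are annihilated, so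
`ε̂ = β* A + MosaicResid(ε)` and `β̂ = β* ⟨D, A⟩/⟨D, D⟩ + ⟨D, MosaicResid(ε)⟩/⟨D, D⟩`.
Since `P` is a symmetric involution, right multiplication by `P` is an isometry for `⟨·,·⟩`,
so `A − AP ⊥ A + AP`, i.e. `⟨D, A⟩ = ⟨D, D⟩`. The remaining term is a fixed linear functional
of `ε`, whose expectation vanishes because `E[ε] = 0`.
-/

open MeasureTheory ProbabilityTheory Matrix Finset

noncomputable section

instance matrixMeasurableSpace {α β γ : Type*} [MeasurableSpace γ] :
    MeasurableSpace (Matrix α β γ) :=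
  (inferInstance : MeasurableSpace (α → β → γ))

/-- Entrywise inner product of two matrices. -/
def matInner {N T : ℕ} (U V : Matrix (Fin N) (Fin T) ℝ) : ℝ :=
  ∑ i, ∑ t, U i t * V i t

/-- Augmented design matrix for cluster `m`. -/
def augDesign {N T D M : ℕ} (X : Fin D → Matrix (Fin N) (Fin T) ℝ)
    (P : Matrix (Fin T) (Fin T) ℝ) (c : Fin N → Fin M) (m : Fin M) :
    Matrix ({i : Fin N // c i = m} × Fin T) (Fin D ⊕ Fin D) ℝ :=
  fun p => Sum.elim (fun d => X d p.1.1 p.2) (fun d => (X d * P) p.1.1 p.2)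

/-- Mosaic residuals: cluster-by-cluster OLS residuals on the augmented designs. -/
def mosaicResid {N T D M : ℕ} (X : Fin D → Matrix (Fin N) (Fin T) ℝ)
    (P : Matrix (Fin T) (Fin T) ℝ) (c : Fin N → Fin M)
    (V : Matrix (Fin N) (Fin T) ℝ) : Matrix (Fin N) (Fin T) ℝ :=
  fun i t =>
    ((1 - augDesign X P c (c i) * ((augDesign X P c (c i))ᵀ * augDesign X P c (c i))⁻¹ *
        (augDesign X P c (c i))ᵀ).mulVec (fun q => V q.1.1 q.2)) (⟨i, rfl⟩, t)

section ResidualMaker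

variable {R n k : Type*} [CommRing R] [Fintype n] [DecidableEq n] [Fintype k] [DecidableEq k]

def residualMaker (H : Matrix n k R) : Matrix n n R :=
  1 - H * (Hᵀ * H)⁻¹ * Hᵀ

lemma residualMaker_mul_self {H : Matrix n k R} (h : IsUnit (Hᵀ * H)) :
    residualMaker H * H = 0 := by
  rw [residualMaker, Matrix.sub_mul, Matrix.one_mul, Matrix.mul_assoc, Matrix.mul_assoc,
    Matrix.nonsing_inv_mul _ ((Matrix.isUnit_iff_isUnit_det _).mp h), Matrix.mul_one, sub_self]

end ResidualMaker

section MosaicResid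

variable {N T D M : ℕ} (X : Fin D → Matrix (Fin N) (Fin T) ℝ) (P : Matrix (Fin T) (Fin T) ℝ)
  (c : Fin N → Fin M)

lemma mosaicResid_apply (V : Matrix (Fin N) (Fin T) ℝ) (i : Fin N) (t : Fin T) :
    mosaicResid X P c V i t =
      (residualMaker (augDesign X P c (c i)) *ᵥ fun q => V q.1.1 q.2) (⟨i, rfl⟩, t) :=
  rfl

lemma mosaicResid_add (U V : Matrix (Fin N) (Fin T) ℝ) :
    mosaicResid X P c (U + V) = mosaicResid X P c U + mosaicResid X P c V := by
  ext i t
  exact congrFun (Matrix.mulVec_add _ _ _) _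

lemma mosaicResid_smul (a : ℝ) (V : Matrix (Fin N) (Fin T) ℝ) :
    mosaicResid X P c (a • V) = a • mosaicResid X P c V := by
  ext i t
  exact congrFun (Matrix.mulVec_smul _ a _) _

def mosaicResidLinearMap : Matrix (Fin N) (Fin T) ℝ →ₗ[ℝ] Matrix (Fin N) (Fin T) ℝ where
  toFun := mosaicResid X P c
  map_add' := mosaicResid_add X P c
  map_smul' := mosaicResid_smul X P c

lemma mosaicResid_sum_smul_eq_zero
    (hrank : ∀ m : Fin M, IsUnit ((augDesign X P c m)ᵀ * augDesign X P c m))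
    (γ δ : Fin D → ℝ) :
    mosaicResid X P c (∑ d, γ d • X d + ∑ d, δ d • (X d * P)) = 0 := by
  ext i t
  have hcols : (fun q : {j : Fin N // c j = c i} × Fin T =>
      (∑ d, γ d • X d + ∑ d, δ d • (X d * P)) q.1.1 q.2) =
        augDesign X P c (c i) *ᵥ Sum.elim γ δ := by
    funext q
    simp [Matrix.mulVec, dotProduct, augDesign, Fintype.sum_sum_type, Matrix.sum_apply,
      mul_comm]
  rw [mosaicResid_apply, hcols, Matrix.mulVec_mulVec, residualMaker_mul_self (hrank _),
    Matrix.zero_mulVec]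
  rfl

lemma mosaicResid_of_linear_model
    (hrank : ∀ m : Fin M, IsUnit ((augDesign X P c m)ᵀ * augDesign X P c m))
    {Z W E : Matrix (Fin N) (Fin T) ℝ} {β : ℝ} {γ : Fin D → ℝ}
    (hW : ∀ i t, W i t = Z i t * β + (∑ d, X d i t * γ d) + E i t) :
    mosaicResid X P c W = β • mosaicResid X P c Z + mosaicResid X P c E := by
  have hdecomp : W = β • Z + (∑ d, γ d • X d + ∑ d, (0 : ℝ) • (X d * P)) + E := by
    ext i t
    simp [hW, Matrix.sum_apply, mul_comm]
  rw [hdecomp, mosaicResid_add, mosaicResid_add, mosaicResid_smul,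
    mosaicResid_sum_smul_eq_zero X P c hrank, add_zero]

end MosaicResid

section MatInner

variable {N T : ℕ}

lemma matInner_add_right (U V W : Matrix (Fin N) (Fin T) ℝ) :
    matInner U (V + W) = matInner U V + matInner U W := by
  simp only [matInner, Matrix.add_apply, mul_add, sum_add_distrib]

lemma matInner_smul_right (U V : Matrix (Fin N) (Fin T) ℝ) (a : ℝ) :
    matInner U (a • V) = a * matInner U V := by
  simp only [matInner, Matrix.smul_apply, smul_eq_mul, mul_sum, mul_left_comm a]

def matInnerLinearMap (U : Matrix (Fin N) (Fin T) ℝ) : Matrix (Fin N) (Fin T) ℝ →ₗ[ℝ] ℝ where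
  toFun := matInner U
  map_add' := matInner_add_right U
  map_smul' a V := matInner_smul_right U V a

lemma matInner_eq_trace (U V : Matrix (Fin N) (Fin T) ℝ) : matInner U V = (U * Vᵀ).trace := by
  simp [matInner, Matrix.trace, Matrix.mul_apply, Matrix.diag]

lemma matInner_half_sub_mul_self {P : Matrix (Fin T) (Fin T) ℝ} (hPsymm : Pᵀ = P)
    (hPidem : P * P = 1) (A : Matrix (Fin N) (Fin T) ℝ) :
    matInner ((1 / 2 : ℝ) • (A - A * P)) A =
      matInner ((1 / 2 : ℝ) • (A - A * P)) ((1 / 2 : ℝ) • (A - A * P)) := by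
  have hAPt : (A * P)ᵀ = P * Aᵀ := by rw [Matrix.transpose_mul, hPsymm]
  have hisometry : (A * P * (A * P)ᵀ).trace = (A * Aᵀ).trace := by
    rw [hAPt, Matrix.mul_assoc, ← Matrix.mul_assoc P P, hPidem, Matrix.one_mul]
  have hcross : (A * (A * P)ᵀ).trace = (A * P * Aᵀ).trace := by
    rw [hAPt, ← Matrix.mul_assoc]
  simp only [matInner_eq_trace, Matrix.transpose_smul, Matrix.smul_mul, Matrix.mul_smul,
    Matrix.trace_smul, smul_eq_mul, Matrix.sub_mul, Matrix.mul_sub, Matrix.transpose_sub,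
    Matrix.trace_sub]
  linarith

end MatInner

section Expectation

variable {Ω ι κ : Type*} [MeasurableSpace Ω] {μ : Measure Ω} [Fintype ι] [DecidableEq ι]
  [Fintype κ] [DecidableEq κ]

lemma LinearMap.apply_eq_sum_entries (L : Matrix ι κ ℝ →ₗ[ℝ] ℝ) (m : Matrix ι κ ℝ) :
    L m = ∑ i, ∑ j, m i j * L (Matrix.single i j 1) := by
  conv_lhs => rw [matrix_eq_sum_single m]
  simp only [map_sum]
  refine sum_congr rfl fun i _ => sum_congr rfl fun j _ => ?_
  rw [← smul_eq_mul, ← map_smul, smul_single, smul_eq_mul, mul_one]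

lemma LinearMap.integrable_comp_of_integrable_entries (L : Matrix ι κ ℝ →ₗ[ℝ] ℝ)
    {ε : Ω → Matrix ι κ ℝ} (hint : ∀ i j, Integrable (fun ω => ε ω i j) μ) :
    Integrable (fun ω => L (ε ω)) μ := by
  simp only [L.apply_eq_sum_entries (ε _)]
  exact integrable_finsetSum _ fun i _ => integrable_finsetSum _ fun j _ =>
    (hint i j).mul_const _

lemma LinearMap.integral_comp_of_integrable_entries (L : Matrix ι κ ℝ →ₗ[ℝ] ℝ)
    {ε : Ω → Matrix ι κ ℝ} (hint : ∀ i j, Integrable (fun ω => ε ω i j) μ) :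
    ∫ ω, L (ε ω) ∂μ = L (fun i j => ∫ ω, ε ω i j ∂μ) := by
  simp only [L.apply_eq_sum_entries (ε _), L.apply_eq_sum_entries (fun i j => _)]
  rw [integral_finsetSum _ fun i _ => integrable_finsetSum _ fun j _ =>
    (hint i j).mul_const _]
  refine sum_congr rfl fun i _ => ?_
  rw [integral_finsetSum _ fun j _ => (hint i j).mul_const _]
  exact sum_congr rfl fun j _ => integral_mul_const _ _

end Expectation

theorem stmt_11_general {Ω : Type*} [MeasurableSpace Ω] (μ : Measure Ω) [IsProbabilityMeasure μ]
    (N T D M : ℕ) (c : Fin N → Fin M)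
    (Z : Matrix (Fin N) (Fin T) ℝ) (X : Fin D → Matrix (Fin N) (Fin T) ℝ)
    (βstar : ℝ) (γ : Fin D → ℝ)
    (ε : Ω → Matrix (Fin N) (Fin T) ℝ)
    (hint : ∀ i t, Integrable (fun ω => ε ω i t) μ)
    (hmean : ∀ i t, ∫ ω, ε ω i t ∂μ = 0)
    (P : Matrix (Fin T) (Fin T) ℝ) (hPsymm : Pᵀ = P) (hPidem : P * P = 1)
    (hrank : ∀ m : Fin M, IsUnit ((augDesign X P c m)ᵀ * augDesign X P c m))
    (Y : Ω → Matrix (Fin N) (Fin T) ℝ)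
    (hY : ∀ ω i t, Y ω i t = Z i t * βstar + (∑ d, X d i t * γ d) + ε ω i t)
    (A : Matrix (Fin N) (Fin T) ℝ) (hA : A = mosaicResid X P c Z)
    (Dmat : Matrix (Fin N) (Fin T) ℝ) (hD : Dmat = (1 / 2 : ℝ) • (A - A * P))
    (hDD : 0 < matInner Dmat Dmat)
    (βhat : Ω → ℝ)
    (hβhat : ∀ ω, βhat ω = matInner Dmat (mosaicResid X P c (Y ω)) / matInner Dmat Dmat) :
    ∫ ω, βhat ω ∂μ = βstar := by
  set e : Ω → ℝ := fun ω => matInner Dmat (mosaicResid X P c (ε ω))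
  have hDA : matInner Dmat A = matInner Dmat Dmat :=
    hD ▸ matInner_half_sub_mul_self hPsymm hPidem A
  have hβ : ∀ ω, βhat ω = βstar + e ω / matInner Dmat Dmat := by
    intro ω
    rw [hβhat, mosaicResid_of_linear_model X P c hrank (hY ω), ← hA, matInner_add_right,
      matInner_smul_right, hDA, add_div, mul_div_assoc, div_self hDD.ne', mul_one]
  let L := (matInnerLinearMap Dmat).comp (mosaicResidLinearMap X P c)
  have he_int : Integrable e μ := L.integrable_comp_of_integrable_entries hint
  have he_mean : ∫ ω, e ω ∂μ = 0 := by
    have hEε : (fun i t => ∫ ω, ε ω i t ∂μ) = (0 : Matrix (Fin N) (Fin T) ℝ) := funext₂ hmean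
    rw [show e = fun ω => L (ε ω) from rfl, L.integral_comp_of_integrable_entries hint, hEε,
      map_zero]
  calc ∫ ω, βhat ω ∂μ = ∫ ω, (βstar + e ω / matInner Dmat Dmat) ∂μ := by simp only [hβ]
    _ = βstar + (∫ ω, e ω ∂μ) / matInner Dmat Dmat := by
        rw [integral_add (integrable_const _) (he_int.div_const _), integral_const,
          probReal_univ, one_smul, integral_div]
    _ = βstar := by rw [he_mean, zero_div, add_zero]

/-- **unbiasedness of the mosaic estimator.**
Consider `Y_{i,t} = Z_{i,t}β* + X_{i,t}ᵀγ + ε_{i,t}` with fixed `Z`, fixed controls `X`,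
and integrable mean-zero errors.  With a partition into `M` clusters, `P` symmetric with
`P² = I`, `ε̂ = MosaicResid(Y, X)`, `A = MosaicResid(Z, X)`, `D = ½(A − AP)` and
`⟨D,D⟩ > 0` (full column rank of the augmented designs assumed), the mosaic estimator
`β̂ = ⟨D, ε̂⟩ / ⟨D, D⟩` satisfies `E[β̂] = β*`. -/
theorem stmt_11 {Ω : Type*} [MeasurableSpace Ω] (μ : Measure Ω) [IsProbabilityMeasure μ]
    (N T D M : ℕ) (c : Fin N → Fin M)
    (Z : Matrix (Fin N) (Fin T) ℝ) (X : Fin D → Matrix (Fin N) (Fin T) ℝ)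
    (βstar : ℝ) (γ : Fin D → ℝ)
    (ε : Ω → Matrix (Fin N) (Fin T) ℝ) (hmeas : Measurable ε)
    (hint : ∀ i t, Integrable (fun ω => ε ω i t) μ)
    (hmean : ∀ i t, ∫ ω, ε ω i t ∂μ = 0)
    (P : Matrix (Fin T) (Fin T) ℝ) (hPsymm : Pᵀ = P) (hPidem : P * P = 1)
    (hrank : ∀ m : Fin M, IsUnit ((augDesign X P c m)ᵀ * augDesign X P c m))
    (Y : Ω → Matrix (Fin N) (Fin T) ℝ)
    (hY : ∀ ω i t, Y ω i t = Z i t * βstar + (∑ d, X d i t * γ d) + ε ω i t)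
    (A : Matrix (Fin N) (Fin T) ℝ) (hA : A = mosaicResid X P c Z)
    (Dmat : Matrix (Fin N) (Fin T) ℝ) (hD : Dmat = (1 / 2 : ℝ) • (A - A * P))
    (hDD : 0 < matInner Dmat Dmat)
    (βhat : Ω → ℝ)
    (hβhat : ∀ ω, βhat ω = matInner Dmat (mosaicResid X P c (Y ω)) / matInner Dmat Dmat) :
    ∫ ω, βhat ω ∂μ = βstar :=
  stmt_11_general μ N T D M c Z X βstar γ ε hint hmean P hPsymm hPidem hrank Y hY A hA Dmat hD hDD
    βhat hβhat

end
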